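/- Let f: ℝ → ℝ be the additive shift f(x) = d + x for a fixed real d. If d is not a decimal fraction (d ∉ ℚ_D) or d > 0, then the induced map on canonical decimal expansions is discontinuous at some point, in the sense that there exists a real number e such that for every n₀ there are reals e' agreeing with e in sign, order and all digits down to 10^{−n₀}, but such that d + e' and d + e differ in sign or in their digit at 10^0. -/
import Mathlib


/-- The decimal fractions inside the reals: reals of the form `m / 10^j`
(exactly the reals with terminating decimal expansion). -/
def QDR : Set ℝ := {x | ∃ m : ℤ, ∃ j : ℕ, x = (m : ℝ) / 10 ^ j}

/-- The digit at `10^n` in the canonical decimal expansion of (the absolute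
value of) a real number. -/
noncomputable def digit (x : ℝ) (n : ℤ) : ℤ := ⌊|x| * 10 ^ (-n)⌋ % 10

private lemma floor_add_eq' {t ε : ℝ} (h0 : 0 ≤ ε) (h : t + ε < ⌊t⌋ + 1) :
    ⌊t + ε⌋ = ⌊t⌋ := by
  rw [Int.floor_eq_iff]
  exact ⟨le_add_of_le_of_nonneg (Int.floor_le t) h0, by linarith⟩

private lemma floor_sub_eq' {t ε : ℝ} (h0 : 0 ≤ ε) (h : (⌊t⌋ : ℝ) ≤ t - ε) :
    ⌊t - ε⌋ = ⌊t⌋ := by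
  rw [Int.floor_eq_iff]
  exact ⟨h, lt_of_le_of_lt (by linarith) (Int.lt_floor_add_one t)⟩

private lemma exists_small_pow {c : ℝ} (hc : 0 < c) :
    ∃ k : ℕ, (10 : ℝ) ^ (-(k : ℤ)) < c := by
  obtain ⟨k, hk⟩ := exists_pow_lt_of_lt_one hc (by norm_num : (1 / 10 : ℝ) < 1)
  refine ⟨k, ?_⟩
  have : (10 : ℝ) ^ (-(k : ℤ)) = (1 / 10 : ℝ) ^ k := by
    rw [zpow_neg, zpow_natCast, one_div, inv_pow]
  rw [this]; exact hk

private lemma ten_zpow_pos (m : ℤ) : (0 : ℝ) < 10 ^ m := zpow_pos (by norm_num) m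

private lemma ten_zpow_mono {a b : ℤ} (h : a ≤ b) : (10 : ℝ) ^ a ≤ 10 ^ b :=
  zpow_le_zpow_right₀ (by norm_num) h

/-- Adding a sufficiently small `10 ^ (-k)` to a nonnegative real does not change
any of the floors `⌊x * 10 ^ (-m)⌋` for `m ≥ -n₀`. -/
private lemma lemA (x : ℝ) (hx : 0 ≤ x) (n₀ : ℕ) :
    ∃ k : ℕ, ∀ m : ℤ, -(n₀ : ℤ) ≤ m →
      ⌊(x + (10 : ℝ) ^ (-(k : ℤ))) * 10 ^ (-m)⌋ = ⌊x * 10 ^ (-m)⌋ := by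
  obtain ⟨M, hM⟩ : ∃ M : ℕ, x + 1 < 10 ^ M := pow_unbounded_of_one_lt _ (by norm_num)
  have hxM : x < (10 : ℝ) ^ (M : ℤ) := by
    rw [zpow_natCast]; linarith
  -- the finite range of exponents
  have hS : (Finset.Icc (-(n₀ : ℤ)) (M : ℤ)).Nonempty := by
    refine ⟨0, ?_⟩
    simp [Finset.mem_Icc]
  set c₁ : ℝ := (Finset.Icc (-(n₀ : ℤ)) (M : ℤ)).inf' hS
      (fun m => (⌊x * 10 ^ (-m)⌋ : ℝ) + 1 - x * 10 ^ (-m)) with hc₁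
  have hc₁pos : 0 < c₁ := by
    rw [hc₁, Finset.lt_inf'_iff]
    intro m _
    have := Int.lt_floor_add_one (x * 10 ^ (-m))
    push_cast at this ⊢
    linarith
  set c₂ : ℝ := 1 - x * 10 ^ (-(M : ℤ)) with hc₂
  have hc₂pos : 0 < c₂ := by
    have h1 : x * 10 ^ (-(M : ℤ)) < 10 ^ (M : ℤ) * 10 ^ (-(M : ℤ)) :=
      mul_lt_mul_of_pos_right hxM (ten_zpow_pos _)
    have h2 : (10 : ℝ) ^ (M : ℤ) * 10 ^ (-(M : ℤ)) = 1 := by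
      rw [← zpow_add₀ (by norm_num : (10 : ℝ) ≠ 0)]; simp
    rw [hc₂]; rw [h2] at h1; linarith
  -- uniform gap
  have key : ∀ m : ℤ, -(n₀ : ℤ) ≤ m →
      min c₁ c₂ ≤ (⌊x * 10 ^ (-m)⌋ : ℝ) + 1 - x * 10 ^ (-m) := by
    intro m hm
    by_cases hmM : m ≤ (M : ℤ)
    · refine le_trans (min_le_left _ _) ?_
      exact Finset.inf'_le _ (Finset.mem_Icc.mpr ⟨hm, hmM⟩)
    · push_neg at hmM
      have hle : x * 10 ^ (-m) ≤ x * 10 ^ (-(M : ℤ)) :=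
        mul_le_mul_of_nonneg_left (ten_zpow_mono (by omega)) hx
      have hlt1 : x * 10 ^ (-m) < 1 := by
        have : x * 10 ^ (-(M : ℤ)) < 1 := by rw [hc₂] at hc₂pos; linarith
        linarith
      have hnn : 0 ≤ x * 10 ^ (-m) := mul_nonneg hx (ten_zpow_pos _).le
      have hfl : ⌊x * 10 ^ (-m)⌋ = 0 := by
        rw [Int.floor_eq_zero_iff]; exact ⟨hnn, hlt1⟩
      rw [hfl]
      refine le_trans (min_le_right _ _) ?_
      push_cast
      rw [hc₂]
      linarith
  obtain ⟨k, hk⟩ := exists_small_pow (c := min c₁ c₂ * 10 ^ (-(n₀ : ℤ)))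
    (mul_pos (lt_min hc₁pos hc₂pos) (ten_zpow_pos _))
  refine ⟨k, fun m hm => ?_⟩
  have hrw : (x + (10 : ℝ) ^ (-(k : ℤ))) * 10 ^ (-m)
      = x * 10 ^ (-m) + (10 : ℝ) ^ (-(k : ℤ)) * 10 ^ (-m) := by ring
  rw [hrw]
  apply floor_add_eq'
  · exact mul_nonneg (ten_zpow_pos _).le (ten_zpow_pos _).le
  · have h1 : (10 : ℝ) ^ (-(k : ℤ)) * 10 ^ (-m) < min c₁ c₂ * 10 ^ (-(n₀ : ℤ)) * 10 ^ (-m) :=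
      mul_lt_mul_of_pos_right hk (ten_zpow_pos _)
    have h2 : min c₁ c₂ * 10 ^ (-(n₀ : ℤ)) * 10 ^ (-m)
        ≤ min c₁ c₂ * 10 ^ (-(n₀ : ℤ)) * 10 ^ ((n₀ : ℤ)) := by
      apply mul_le_mul_of_nonneg_left (ten_zpow_mono (by omega))
      exact (mul_pos (lt_min hc₁pos hc₂pos) (ten_zpow_pos _)).le
    have h3 : min c₁ c₂ * 10 ^ (-(n₀ : ℤ)) * 10 ^ ((n₀ : ℤ)) = min c₁ c₂ := by
      rw [mul_assoc, ← zpow_add₀ (by norm_num : (10 : ℝ) ≠ 0)]; simp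
    have h4 := key m hm
    rw [h3] at h2
    linarith

/-- If `x ∉ QDR` then `x * 10 ^ (-m)` is never an integer, so the floor is strict. -/
private lemma notQDR_floor_lt {x : ℝ} (hq : x ∉ QDR) (m : ℤ) :
    (⌊x * 10 ^ (-m)⌋ : ℝ) < x * 10 ^ (-m) := by
  rcases lt_or_eq_of_le (Int.floor_le (x * 10 ^ (-m))) with h | h
  · exact h
  · exfalso
    apply hq
    obtain ⟨z, hz⟩ : ∃ z : ℤ, (z : ℝ) = x * 10 ^ (-m) := ⟨_, h⟩
    have hx : x = (z : ℝ) * 10 ^ m := by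
      have h10 : (10 : ℝ) ^ (-m) * 10 ^ m = 1 := by
        rw [← zpow_add₀ (by norm_num : (10 : ℝ) ≠ 0)]; simp
      calc x = x * ((10 : ℝ) ^ (-m) * 10 ^ m) := by rw [h10, mul_one]
        _ = (x * 10 ^ (-m)) * 10 ^ m := by ring
        _ = (z : ℝ) * 10 ^ m := by rw [hz]
    rcases le_or_gt 0 m with hm | hm
    · refine ⟨z * 10 ^ m.toNat, 0, ?_⟩
      rw [hx]
      simp only [pow_zero, div_one]
      push_cast
      rw [← zpow_natCast (10 : ℝ) m.toNat, Int.toNat_of_nonneg hm]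
    · refine ⟨z, (-m).toNat, ?_⟩
      rw [hx, eq_div_iff (by positivity)]
      rw [← zpow_natCast (10 : ℝ) (-m).toNat, Int.toNat_of_nonneg (by omega : (0:ℤ) ≤ -m)]
      rw [mul_assoc, ← zpow_add₀ (by norm_num : (10 : ℝ) ≠ 0)]
      simp

/-- Subtracting a sufficiently small `10 ^ (-k)` from `x ∉ QDR`, `x > 1`, does not
change any of the floors `⌊x * 10 ^ (-m)⌋` for `m ≥ -n₀`. -/
private lemma lemB (x : ℝ) (hx : 1 < x) (hq : x ∉ QDR) (n₀ : ℕ) :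
    ∃ k : ℕ, ∀ m : ℤ, -(n₀ : ℤ) ≤ m →
      ⌊(x - (10 : ℝ) ^ (-(k : ℤ))) * 10 ^ (-m)⌋ = ⌊x * 10 ^ (-m)⌋ := by
  have hx0 : 0 ≤ x := by linarith
  obtain ⟨M, hM⟩ : ∃ M : ℕ, x + 1 < 10 ^ M := pow_unbounded_of_one_lt _ (by norm_num)
  have hxM : x < (10 : ℝ) ^ (M : ℤ) := by
    rw [zpow_natCast]; linarith
  have hS : (Finset.Icc (-(n₀ : ℤ)) (M : ℤ)).Nonempty := by
    refine ⟨0, ?_⟩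
    simp [Finset.mem_Icc]
  set c₁ : ℝ := (Finset.Icc (-(n₀ : ℤ)) (M : ℤ)).inf' hS
      (fun m => x * 10 ^ (-m) - (⌊x * 10 ^ (-m)⌋ : ℝ)) with hc₁
  have hc₁pos : 0 < c₁ := by
    rw [hc₁, Finset.lt_inf'_iff]
    intro m _
    have := notQDR_floor_lt hq m
    linarith
  obtain ⟨k, hk⟩ := exists_small_pow (c := c₁ * 10 ^ (-(n₀ : ℤ)))
    (mul_pos hc₁pos (ten_zpow_pos _))
  refine ⟨k, fun m hm => ?_⟩
  have hδ1 : (10 : ℝ) ^ (-(k : ℤ)) ≤ 1 := by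
    have := ten_zpow_mono (a := -(k : ℤ)) (b := 0) (by omega)
    simpa using this
  have hrw : (x - (10 : ℝ) ^ (-(k : ℤ))) * 10 ^ (-m)
      = x * 10 ^ (-m) - (10 : ℝ) ^ (-(k : ℤ)) * 10 ^ (-m) := by ring
  rw [hrw]
  apply floor_sub_eq' (mul_nonneg (ten_zpow_pos _).le (ten_zpow_pos _).le)
  by_cases hmM : m ≤ (M : ℤ)
  · have h1 : (10 : ℝ) ^ (-(k : ℤ)) * 10 ^ (-m) < c₁ * 10 ^ (-(n₀ : ℤ)) * 10 ^ (-m) :=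
      mul_lt_mul_of_pos_right hk (ten_zpow_pos _)
    have h2 : c₁ * 10 ^ (-(n₀ : ℤ)) * 10 ^ (-m) ≤ c₁ * 10 ^ (-(n₀ : ℤ)) * 10 ^ ((n₀ : ℤ)) :=
      mul_le_mul_of_nonneg_left (ten_zpow_mono (by omega))
        (mul_pos hc₁pos (ten_zpow_pos _)).le
    have h3 : c₁ * 10 ^ (-(n₀ : ℤ)) * 10 ^ ((n₀ : ℤ)) = c₁ := by
      rw [mul_assoc, ← zpow_add₀ (by norm_num : (10 : ℝ) ≠ 0)]; simp
    have h4 : c₁ ≤ x * 10 ^ (-m) - (⌊x * 10 ^ (-m)⌋ : ℝ) :=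
      Finset.inf'_le _ (Finset.mem_Icc.mpr ⟨hm, hmM⟩)
    rw [h3] at h2
    linarith
  · push_neg at hmM
    have hle : x * 10 ^ (-m) ≤ x * 10 ^ (-(M : ℤ)) :=
      mul_le_mul_of_nonneg_left (ten_zpow_mono (by omega)) hx0
    have hM1 : x * 10 ^ (-(M : ℤ)) < 1 := by
      have h1 : x * 10 ^ (-(M : ℤ)) < 10 ^ (M : ℤ) * 10 ^ (-(M : ℤ)) :=
        mul_lt_mul_of_pos_right hxM (ten_zpow_pos _)
      have h2 : (10 : ℝ) ^ (M : ℤ) * 10 ^ (-(M : ℤ)) = 1 := by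
        rw [← zpow_add₀ (by norm_num : (10 : ℝ) ≠ 0)]; simp
      linarith
    have hfl : ⌊x * 10 ^ (-m)⌋ = 0 := by
      rw [Int.floor_eq_zero_iff]
      exact ⟨mul_nonneg hx0 (ten_zpow_pos _).le, by linarith⟩
    rw [hfl]
    push_cast
    have : (10 : ℝ) ^ (-(k : ℤ)) * 10 ^ (-m) ≤ x * 10 ^ (-m) :=
      mul_le_mul_of_nonneg_right (by linarith) (ten_zpow_pos _).le
    linarith

/-- If `d ∉ ℚ_D` or `d > 0`, then the additive `d`-shift is discontinuous at
some real `e`: for every `n₀` there is `e'` agreeing with `e` in sign and in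
all digits down to `10^{−n₀}`, but such that `d + e'` and `d + e` differ in
sign or in the digit at `10^0`. -/
theorem additive_shift_discontinuous (d : ℝ) (hd : d ∉ QDR ∨ 0 < d) :
    ∃ e : ℝ, ∀ n₀ : ℕ, ∃ e' : ℝ,
      (Real.sign e' = Real.sign e ∧
        ∀ m : ℤ, -(n₀ : ℤ) ≤ m → digit e' m = digit e m) ∧
      (Real.sign (d + e') ≠ Real.sign (d + e) ∨
        digit (d + e') 0 ≠ digit (d + e) 0) := by
  by_cases hpos : 0 < d
  · -- e = -d ; e' = -(d + 10^{-k})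
    refine ⟨-d, fun n₀ => ?_⟩
    obtain ⟨k, hk⟩ := lemA d hpos.le n₀
    have hδpos : (0 : ℝ) < 10 ^ (-(k : ℤ)) := ten_zpow_pos _
    refine ⟨-(d + 10 ^ (-(k : ℤ))), ⟨?_, ?_⟩, Or.inl ?_⟩
    · rw [Real.sign_of_neg (by linarith), Real.sign_of_neg (by linarith)]
    · intro m hm
      unfold digit
      rw [abs_neg, abs_neg, abs_of_pos hpos, abs_of_pos (by linarith)]
      rw [hk m hm]
    · have h1 : d + -(d + 10 ^ (-(k : ℤ))) = -(10 ^ (-(k : ℤ))) := by ring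
      have h2 : d + -d = 0 := by ring
      rw [h1, h2, Real.sign_zero, Real.sign_of_neg (by linarith)]
      norm_num
  · -- d < 0 and d ∉ QDR ; e = 1 - d ; e' = e - 10^{-k}
    have hq : d ∉ QDR := by
      rcases hd with h | h
      · exact h
      · exact absurd h hpos
    have hd0 : d < 0 := by
      rcases lt_or_eq_of_le (not_lt.mp hpos) with h | h
      · exact h
      · exact absurd (h ▸ (⟨0, 0, by norm_num⟩ : (0 : ℝ) ∈ QDR)) hq
    set e : ℝ := 1 - d with he
    have hee : 1 < e := by rw [he]; linarith
    have heq : e ∉ QDR := by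
      rintro ⟨m, j, hmj⟩
      apply hq
      refine ⟨10 ^ j - m, j, ?_⟩
      have h10 : ((10 : ℝ) ^ j) ≠ 0 := by positivity
      have : d = 1 - e := by rw [he]; ring
      rw [this, hmj]
      push_cast
      field_simp
    refine ⟨e, fun n₀ => ?_⟩
    obtain ⟨k, hk⟩ := lemB e hee heq n₀
    have hδpos : (0 : ℝ) < 10 ^ (-(k : ℤ)) := ten_zpow_pos _
    have hδ1 : (10 : ℝ) ^ (-(k : ℤ)) ≤ 1 := by
      have := ten_zpow_mono (a := -(k : ℤ)) (b := 0) (by omega)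
      simpa using this
    refine ⟨e - 10 ^ (-(k : ℤ)), ⟨?_, ?_⟩, Or.inr ?_⟩
    · rw [Real.sign_of_pos (by linarith), Real.sign_of_pos (by linarith)]
    · intro m hm
      unfold digit
      rw [abs_of_pos (by linarith), abs_of_pos (by linarith)]
      rw [hk m hm]
    · have h1 : d + (e - 10 ^ (-(k : ℤ))) = 1 - 10 ^ (-(k : ℤ)) := by rw [he]; ring
      have h2 : d + e = 1 := by rw [he]; ring
      rw [h1, h2]
      have e1 : digit (1 - 10 ^ (-(k : ℤ))) 0 = 0 := by
        unfold digit
        rw [neg_zero, zpow_zero, mul_one, abs_of_nonneg (by linarith)]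
        rw [Int.floor_eq_zero_iff.mpr (Set.mem_Ico.mpr ⟨by linarith, by linarith⟩)]
        decide
      have e2 : digit (1 : ℝ) 0 = 1 := by
        unfold digit
        rw [neg_zero, zpow_zero, mul_one, abs_one, Int.floor_one]
        decide
      rw [e1, e2]
      norm_num
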